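/- Let n ≥ 2. The total Lebesgue volume of all 2^n peaks of the cross polytope equals vol(O_n)/(n-1); equivalently, the cross polytope with all peaks P = O_n ∪ ⋃_{s ∈ {-1,1}^n} peak_s satisfies vol(P) = (n/(n-1))·vol(O_n) = 2^n/((n-1)·(n-1)!). -/

import Mathlib

open MeasureTheory Set ENNReal

/-- The cross polytope `O_n`: the convex hull of `{±e_i : i ∈ [n]}`. -/
noncomputable def crossPolytope (n : ℕ) : Set (Fin n → ℝ) :=
  convexHull ℝ ((Set.range fun i : Fin n => Pi.single i (1 : ℝ)) ∪
    (Set.range fun i : Fin n => Pi.single i (-1 : ℝ)))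

/-- The set of sign vectors `{-1,1}^n`, indexing the facets of the cross polytope. -/
def Signs (n : ℕ) : Set (Fin n → ℝ) := {s | ∀ i, s i = 1 ∨ s i = -1}

/-- The peak attached to the facet `F_s = conv{s_i e_i}`, namely
`conv(F_s ∪ {s/(n-1)})`. -/
noncomputable def peak (n : ℕ) (s : Fin n → ℝ) : Set (Fin n → ℝ) :=
  convexHull ℝ ((Set.range fun i : Fin n => Pi.single i (s i)) ∪ {((n : ℝ) - 1)⁻¹ • s})

/-!
Write `f_s x = s ⬝ᵥ x`. The part `conv({0} ∪ F_s)` of `O_n` in the orthant of `s` and the peak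
`conv(F_s ∪ {s/(n-1)})` are pyramids over the same base `F_s ⊆ {f_s = 1}`. The affine map
`x ↦ x + (1 - f_s x) • s/(n-1)` fixes that hyperplane pointwise and sends the apex `0` to the apex
`s/(n-1)`; its linear part is a transvection of determinant `1 - f_s (s/(n-1)) = -1/(n-1)`. So each
peak has `1/(n-1)` of the volume of the corresponding orthant piece, and summing over the orthants,
which overlap only in coordinate hyperplanes, gives `vol(O_n)/(n-1)`. The peaks meet `O_n` only in
the facet hyperplanes `f_s = 1`, and `vol(O_n) = 2^n/n!` is the volume of the `ℓ¹` unit ball.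
-/

theorem Convex.sum_mem_of_zero_mem {𝕜 E ι : Type*} [Field 𝕜] [LinearOrder 𝕜]
    [IsStrictOrderedRing 𝕜] [AddCommGroup E] [Module 𝕜 E] {C : Set E} (hC : Convex 𝕜 C)
    (h₀ : (0 : E) ∈ C) {t : Finset ι} {w : ι → 𝕜} {z : ι → E} (hw₀ : ∀ i ∈ t, 0 ≤ w i)
    (hw₁ : ∑ i ∈ t, w i ≤ 1) (hz : ∀ i ∈ t, z i ∈ C) : ∑ i ∈ t, w i • z i ∈ C := by
  rcases (Finset.sum_nonneg hw₀).eq_or_lt with hW | hW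
  · rw [Finset.sum_eq_zero fun i hi => by
      rw [(Finset.sum_eq_zero_iff_of_nonneg hw₀).1 hW.symm i hi, zero_smul]]
    exact h₀
  · have hmean : ∑ i ∈ t, (w i / ∑ j ∈ t, w j) • z i ∈ C :=
      hC.sum_mem (fun i hi => div_nonneg (hw₀ i hi) hW.le)
        (by rw [← Finset.sum_div, div_self hW.ne']) hz
    convert hC.smul_mem_of_zero_mem h₀ hmean ⟨hW.le, hw₁⟩ using 1
    simp only [Finset.smul_sum, smul_smul, mul_div_cancel₀ _ hW.ne']

section ApexShift

variable {𝕜 E : Type*} [Field 𝕜] [AddCommGroup E] [Module 𝕜 E]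

noncomputable def apexShift (f : Module.Dual 𝕜 E) (w : E) : E →ᵃ[𝕜] E :=
  (LinearMap.transvection (-f) w).toAffineMap + AffineMap.const 𝕜 E w

theorem apexShift_apply (f : Module.Dual 𝕜 E) (w x : E) :
    apexShift f w x = x + (1 - f x) • w := by
  simp only [apexShift, AffineMap.coe_add, Pi.add_apply, LinearMap.coe_toAffineMap,
    LinearMap.transvection.apply, LinearMap.neg_apply, AffineMap.const_apply]
  module

theorem image_apexShift_convexHull_insert_zero [LinearOrder 𝕜] [IsStrictOrderedRing 𝕜]
    {f : Module.Dual 𝕜 E} {B : Set E} (hB : B ⊆ {x | f x = 1}) (w : E) :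
    apexShift f w '' convexHull 𝕜 (insert 0 B) = convexHull 𝕜 (insert w B) := by
  rw [AffineMap.image_convexHull, image_insert_eq, image_congr fun x hx => ?_, image_id']
  · simp [apexShift_apply]
  · have hfx : f x = 1 := hB hx
    simp [apexShift_apply, hfx]

end ApexShift

section Haar

variable {E : Type*} [NormedAddCommGroup E] [NormedSpace ℝ E] [MeasurableSpace E] [BorelSpace E]
  [FiniteDimensional ℝ E] (μ : Measure E) [μ.IsAddHaarMeasure]

theorem addHaar_preimage_singleton {f : E →ₗ[ℝ] ℝ} (hf : f ≠ 0) (c : ℝ) :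
    μ (f ⁻¹' {c}) = 0 := by
  obtain ⟨x₀, rfl⟩ := LinearMap.surjective_of_ne_zero hf c
  have hshift : f ⁻¹' {f x₀} = (fun x => x + -x₀) ⁻¹' (LinearMap.ker f) := by
    ext x
    simp [sub_eq_zero, ← sub_eq_add_neg]
  rw [hshift, measure_preimage_add_right]
  exact Measure.addHaar_submodule μ _ (by rwa [Ne, LinearMap.ker_eq_top])

theorem addHaar_image_apexShift (f : Module.Dual ℝ E) (w : E) (S : Set E) :
    μ (apexShift f w '' S) = ENNReal.ofReal |1 - f w| * μ S := by
  have hcomp : ⇑(apexShift f w) = (· + w) ∘ LinearMap.transvection (-f) w := by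
    funext x; simp [apexShift]
  rw [hcomp, image_comp, image_add_right, measure_preimage_add_right,
    Measure.addHaar_image_linearMap, LinearMap.transvection.det, LinearMap.neg_apply,
    ← sub_eq_add_neg]

theorem addHaar_convexHull_insert {f : Module.Dual ℝ E} {B : Set E} (hB : B ⊆ {x | f x = 1})
    (w : E) :
    μ (convexHull ℝ (insert w B)) = ENNReal.ofReal |1 - f w| * μ (convexHull ℝ (insert 0 B)) := by
  rw [← image_apexShift_convexHull_insert_zero hB, addHaar_image_apexShift]

end Haar

section CrossPolytope

variable {n : ℕ}

theorem mul_self_of_mem_signs {s : Fin n → ℝ} (hs : s ∈ Signs n) (i : Fin n) : s i * s i = 1 := by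
  rcases hs i with h | h <;> simp [h]

theorem abs_of_mem_signs {s : Fin n → ℝ} (hs : s ∈ Signs n) (i : Fin n) : |s i| = 1 := by
  rcases hs i with h | h <;> simp [h]

theorem dotProduct_self_of_mem_signs {s : Fin n → ℝ} (hs : s ∈ Signs n) : s ⬝ᵥ s = n := by
  simp [dotProduct, mul_self_of_mem_signs hs]

theorem dotProduct_peak_apex {s : Fin n → ℝ} (hs : s ∈ Signs n) :
    s ⬝ᵥ (((n : ℝ) - 1)⁻¹ • s) = n / (n - 1) := by
  rw [dotProduct_smul, dotProduct_self_of_mem_signs hs, smul_eq_mul, inv_mul_eq_div]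

theorem finite_signs (n : ℕ) : (Signs n).Finite := by
  have : Signs n = Set.pi univ fun _ => {1, -1} := by ext s; simp [Signs]
  rw [this]
  exact Set.Finite.pi fun _ => by simp

def orthant (s : Fin n → ℝ) : Set (Fin n → ℝ) := {x | ∀ i, 0 ≤ s i * x i}

theorem convex_orthant (s : Fin n → ℝ) : Convex ℝ (orthant s) := by
  intro x hx y hy a b ha hb _ i
  simp only [Pi.add_apply, Pi.smul_apply, smul_eq_mul, mul_add, mul_left_comm (s i)]
  exact add_nonneg (mul_nonneg ha (hx i)) (mul_nonneg hb (hy i))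

def facetVertices (s : Fin n → ℝ) : Set (Fin n → ℝ) := range fun i => Pi.single i (s i)

/-- The part of the cross polytope lying in the orthant of `s`. -/
noncomputable def orthantSimplex (s : Fin n → ℝ) : Set (Fin n → ℝ) :=
  convexHull ℝ (insert 0 (facetVertices s))

theorem facetVertices_subset_orthant (s : Fin n → ℝ) : facetVertices s ⊆ orthant s := by
  rintro _ ⟨i, rfl⟩ j
  rcases eq_or_ne j i with rfl | h
  · simpa using mul_self_nonneg (s j)
  · simp [h]

theorem facetVertices_subset_dotProduct_eq_one {s : Fin n → ℝ} (hs : s ∈ Signs n) :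
    facetVertices s ⊆ {x | s ⬝ᵥ x = 1} := by
  rintro _ ⟨i, rfl⟩
  simp [dotProduct_single, mul_self_of_mem_signs hs]

theorem orthantSimplex_subset_orthant (s : Fin n → ℝ) : orthantSimplex s ⊆ orthant s :=
  convexHull_min (insert_subset (fun i => by simp) (facetVertices_subset_orthant s))
    (convex_orthant s)

theorem peak_eq_convexHull_insert (s : Fin n → ℝ) :
    peak n s = convexHull ℝ (insert (((n : ℝ) - 1)⁻¹ • s) (facetVertices s)) := by
  rw [peak, union_singleton, facetVertices]

theorem peak_subset_orthant (hn : 2 ≤ n) (s : Fin n → ℝ) : peak n s ⊆ orthant s := by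
  have hapex : ((n : ℝ) - 1)⁻¹ • s ∈ orthant s := fun i => by
    have : (0 : ℝ) ≤ ((n : ℝ) - 1)⁻¹ := inv_nonneg.2 (sub_pos.2 (Nat.one_lt_cast.2 hn)).le
    simpa [mul_left_comm] using mul_nonneg this (mul_self_nonneg (s i))
  rw [peak_eq_convexHull_insert]
  exact convexHull_min (insert_subset hapex (facetVertices_subset_orthant s)) (convex_orthant s)

theorem convex_setOf_sum_abs_le (r : ℝ) : Convex ℝ {x : Fin n → ℝ | ∑ i, |x i| ≤ r} := by
  intro x hx y hy a b ha hb hab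
  calc ∑ i, |a * x i + b * y i| ≤ ∑ i, (a * |x i| + b * |y i|) :=
        Finset.sum_le_sum fun i _ => (abs_add_le _ _).trans_eq
          (by rw [abs_mul, abs_mul, abs_of_nonneg ha, abs_of_nonneg hb])
    _ = a * ∑ i, |x i| + b * ∑ i, |y i| := by
        rw [Finset.sum_add_distrib, Finset.mul_sum, Finset.mul_sum]
    _ ≤ a * r + b * r := by gcongr <;> assumption
    _ = r := by rw [← add_mul, hab, one_mul]

theorem crossPolytope_subset_setOf_sum_abs_le :
    crossPolytope n ⊆ {x | ∑ i, |x i| ≤ 1} := by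
  refine convexHull_min ?_ (convex_setOf_sum_abs_le 1)
  rintro _ (⟨i, rfl⟩ | ⟨i, rfl⟩) <;> simp [Pi.single_apply, apply_ite]

theorem setOf_sum_abs_le_subset_iUnion_orthantSimplex :
    {x : Fin n → ℝ | ∑ i, |x i| ≤ 1} ⊆ ⋃ s ∈ Signs n, orthantSimplex s := by
  intro x (hx : ∑ i, |x i| ≤ 1)
  set s : Fin n → ℝ := fun i => if x i < 0 then -1 else 1
  refine mem_biUnion (x := s) (fun i => by by_cases h : x i < 0 <;> simp [s, h]) ?_
  have hx_eq : ∑ i, |x i| • Pi.single i (s i) = x := by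
    conv_rhs => rw [← Finset.univ_sum_single x]
    refine Finset.sum_congr rfl fun i _ => ?_
    rw [← Pi.single_smul']
    by_cases h : x i < 0 <;> simp [s, h, abs_of_neg, abs_of_nonneg, not_lt.1]
  rw [← hx_eq]
  exact (convex_convexHull ℝ _).sum_mem_of_zero_mem (subset_convexHull ℝ _ (mem_insert _ _))
    (fun i _ => abs_nonneg (x i)) hx
    (fun i _ => subset_convexHull ℝ _ (mem_insert_of_mem _ ⟨i, rfl⟩))

theorem zero_mem_crossPolytope (hn : n ≠ 0) : (0 : Fin n → ℝ) ∈ crossPolytope n := by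
  let i : Fin n := ⟨0, Nat.pos_of_ne_zero hn⟩
  have h₁ : Pi.single i 1 ∈ crossPolytope n := subset_convexHull ℝ _ (Or.inl ⟨i, rfl⟩)
  have h₂ : Pi.single i (-1) ∈ crossPolytope n := subset_convexHull ℝ _ (Or.inr ⟨i, rfl⟩)
  have hmid := convex_convexHull ℝ _ h₁ h₂ (by norm_num : (0 : ℝ) ≤ 1 / 2)
    (by norm_num : (0 : ℝ) ≤ 1 / 2) (by norm_num)
  simpa [crossPolytope, ← Pi.single_smul', ← Pi.single_add] using hmid

theorem iUnion_orthantSimplex_subset_crossPolytope (hn : n ≠ 0) :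
    ⋃ s ∈ Signs n, orthantSimplex s ⊆ crossPolytope n := by
  refine iUnion₂_subset fun s hs => convexHull_min (insert_subset (zero_mem_crossPolytope hn) ?_)
    (convex_convexHull ℝ _)
  rintro _ ⟨i, rfl⟩
  apply subset_convexHull
  rcases hs i with h | h <;> simp only [h]
  exacts [Or.inl ⟨i, rfl⟩, Or.inr ⟨i, rfl⟩]

theorem crossPolytope_eq_iUnion_orthantSimplex (hn : n ≠ 0) :
    crossPolytope n = ⋃ s ∈ Signs n, orthantSimplex s :=
  ((crossPolytope_subset_setOf_sum_abs_le).trans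
    (setOf_sum_abs_le_subset_iUnion_orthantSimplex)).antisymm
    (iUnion_orthantSimplex_subset_crossPolytope hn)

theorem crossPolytope_eq_setOf_sum_abs_le (hn : n ≠ 0) :
    crossPolytope n = {x | ∑ i, |x i| ≤ 1} :=
  (crossPolytope_subset_setOf_sum_abs_le).antisymm
    ((setOf_sum_abs_le_subset_iUnion_orthantSimplex).trans
      (iUnion_orthantSimplex_subset_crossPolytope hn))

theorem crossPolytope_subset_dotProduct_le_one {s : Fin n → ℝ} (hs : s ∈ Signs n) :
    crossPolytope n ⊆ {x | s ⬝ᵥ x ≤ 1} := fun x hx =>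
  calc s ⬝ᵥ x ≤ ∑ i, |x i| := Finset.sum_le_sum fun i _ =>
        (le_abs_self _).trans_eq (by rw [abs_mul, abs_of_mem_signs hs, one_mul])
    _ ≤ 1 := crossPolytope_subset_setOf_sum_abs_le hx

theorem peak_subset_one_le_dotProduct (hn : 2 ≤ n) {s : Fin n → ℝ} (hs : s ∈ Signs n) :
    peak n s ⊆ {x | 1 ≤ s ⬝ᵥ x} := by
  have hapex : 1 ≤ s ⬝ᵥ (((n : ℝ) - 1)⁻¹ • s) := by
    rw [dotProduct_peak_apex hs, one_le_div (sub_pos.2 (Nat.one_lt_cast.2 hn))]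
    linarith
  rw [peak_eq_convexHull_insert]
  exact convexHull_min
    (insert_subset hapex fun x hx => (facetVertices_subset_dotProduct_eq_one hs hx).ge)
    (convex_halfSpace_ge (dotProductEquiv ℝ (Fin n) s).isLinear 1)

end CrossPolytope

section Volume

variable {n : ℕ} (μ : Measure (Fin n → ℝ)) [μ.IsAddHaarMeasure]

theorem aedisjoint_of_subset_orthant {s t : Fin n → ℝ} (hs : s ∈ Signs n) (ht : t ∈ Signs n)
    (hst : s ≠ t) {A B : Set (Fin n → ℝ)} (hA : A ⊆ orthant s) (hB : B ⊆ orthant t) :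
    AEDisjoint μ A B := by
  obtain ⟨i, hi⟩ := Function.ne_iff.1 hst
  have hproj : LinearMap.proj (R := ℝ) (φ := fun _ : Fin n => ℝ) i ≠ 0 := fun h => by
    simpa using LinearMap.congr_fun h (Pi.single i 1)
  refine measure_mono_null (fun x ⟨hxA, hxB⟩ => ?_) (addHaar_preimage_singleton μ hproj 0)
  have hti : t i = -s i := by
    rcases hs i with h | h <;> rcases ht i with h' | h' <;> simp_all
  have hsx : s i * x i = 0 := le_antisymm (by simpa [hti] using hB hxB i) (hA hxA i)
  have hsi : s i ≠ 0 := fun h => by simpa [h] using abs_of_mem_signs hs i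
  exact (mul_eq_zero.1 hsx).resolve_left hsi

theorem addHaar_biUnion_signs {E : (Fin n → ℝ) → Set (Fin n → ℝ)}
    (hE : ∀ s ∈ Signs n, E s ⊆ orthant s) (hm : ∀ s ∈ Signs n, MeasurableSet (E s)) :
    μ (⋃ s ∈ Signs n, E s) = ∑' s : Signs n, μ (E s) :=
  measure_biUnion₀ (finite_signs n).countable
    (fun s hs t ht hst => aedisjoint_of_subset_orthant μ hs ht hst (hE s hs) (hE t ht))
    fun s hs => (hm s hs).nullMeasurableSet

theorem measurableSet_peak (s : Fin n → ℝ) : MeasurableSet (peak n s) :=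
  ((toFinite _).isCompact_convexHull ℝ).measurableSet

theorem measurableSet_orthantSimplex (s : Fin n → ℝ) : MeasurableSet (orthantSimplex s) :=
  (((finite_range _).insert 0).isCompact_convexHull ℝ).measurableSet

theorem addHaar_peak (hn : 2 ≤ n) {s : Fin n → ℝ} (hs : s ∈ Signs n) :
    μ (peak n s) = ENNReal.ofReal ((n : ℝ) - 1)⁻¹ * μ (orthantSimplex s) := by
  have hn₁ : (0 : ℝ) < n - 1 := sub_pos.2 (Nat.one_lt_cast.2 hn)
  rw [peak_eq_convexHull_insert, orthantSimplex,
    addHaar_convexHull_insert μ (f := dotProductEquiv ℝ (Fin n) s)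
      (facetVertices_subset_dotProduct_eq_one hs)]
  have hratio : (n : ℝ) / (n - 1) - 1 = ((n : ℝ) - 1)⁻¹ := by field_simp; ring
  rw [dotProductEquiv_apply_apply, dotProduct_peak_apex hs, abs_sub_comm, hratio,
    abs_of_pos (inv_pos.2 hn₁)]

theorem addHaar_iUnion_peak (hn : 2 ≤ n) :
    μ (⋃ s ∈ Signs n, peak n s) = μ (crossPolytope n) / ((n : ℝ≥0∞) - 1) := by
  have hn₀ : n ≠ 0 := by omega
  rw [addHaar_biUnion_signs μ (fun s _ => peak_subset_orthant hn s)
      (fun s _ => measurableSet_peak s),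
    crossPolytope_eq_iUnion_orthantSimplex hn₀,
    addHaar_biUnion_signs μ (fun s _ => orthantSimplex_subset_orthant s)
      (fun s _ => measurableSet_orthantSimplex s),
    tsum_congr fun s => addHaar_peak μ hn s.2, ENNReal.tsum_mul_left,
    ENNReal.ofReal_inv_of_pos (sub_pos.2 (Nat.one_lt_cast.2 hn)),
    ENNReal.ofReal_sub _ zero_le_one, ofReal_natCast, ofReal_one, div_eq_mul_inv, mul_comm]

theorem aedisjoint_crossPolytope_iUnion_peak (hn : 2 ≤ n) :
    AEDisjoint μ (crossPolytope n) (⋃ s ∈ Signs n, peak n s) := by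
  rw [AEDisjoint, inter_iUnion₂, measure_biUnion_null_iff (finite_signs n).countable]
  intro s hs
  have hf : dotProductEquiv ℝ (Fin n) s ≠ 0 := fun h => (by omega : n ≠ 0) <| by
    simpa [dotProduct_self_of_mem_signs hs] using LinearMap.congr_fun h s
  refine measure_mono_null (fun x ⟨hxO, hxP⟩ => ?_) (addHaar_preimage_singleton μ hf 1)
  exact (crossPolytope_subset_dotProduct_le_one hs hxO).antisymm
    (peak_subset_one_le_dotProduct hn hs hxP)

end Volume

theorem volume_crossPolytope {n : ℕ} (hn : n ≠ 0) :
    volume (crossPolytope n) = ENNReal.ofReal (2 ^ n / n.factorial) := by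
  have : Nonempty (Fin n) := ⟨⟨0, Nat.pos_of_ne_zero hn⟩⟩
  have h := volume_sum_rpow_le (ι := Fin n) (p := 1) le_rfl 1
  norm_num [Real.Gamma_nat_eq_factorial] at h
  rwa [crossPolytope_eq_setOf_sum_abs_le hn]

theorem volume_all_peaks (n : ℕ) (hn : 2 ≤ n) :
    volume (⋃ s ∈ Signs n, peak n s) = volume (crossPolytope n) / ((n : ℝ≥0∞) - 1) ∧
    volume (crossPolytope n ∪ ⋃ s ∈ Signs n, peak n s) =
      ((n : ℝ≥0∞) / ((n : ℝ≥0∞) - 1)) * volume (crossPolytope n) ∧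
    volume (crossPolytope n ∪ ⋃ s ∈ Signs n, peak n s) =
      ENNReal.ofReal (2 ^ n / (((n : ℝ) - 1) * (n - 1).factorial)) := by
  have hn₀ : n ≠ 0 := by omega
  have hn₁ : (0 : ℝ) < n - 1 := sub_pos.2 (Nat.one_lt_cast.2 hn)
  have hsub : (n : ℝ≥0∞) - 1 = ENNReal.ofReal ((n : ℝ) - 1) := by
    rw [ENNReal.ofReal_sub _ zero_le_one, ofReal_natCast, ofReal_one]
  have hpeaks := addHaar_iUnion_peak volume hn
  have hpeaks_meas : MeasurableSet (⋃ s ∈ Signs n, peak n s) :=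
    .biUnion (finite_signs n).countable fun s _ => measurableSet_peak s
  have hunion : volume (crossPolytope n ∪ ⋃ s ∈ Signs n, peak n s) =
      ENNReal.ofReal (n / (n - 1) * (2 ^ n / n.factorial)) := by
    rw [measure_union₀ hpeaks_meas.nullMeasurableSet
        (aedisjoint_crossPolytope_iUnion_peak volume hn), hpeaks, volume_crossPolytope hn₀, hsub, ← ofReal_div_of_pos hn₁,
      ← ofReal_add (by positivity) (by positivity)]
    congr 1
    field_simp
    ring
  refine ⟨hpeaks, ?_, ?_⟩
  · rw [hunion, volume_crossPolytope hn₀, hsub, ← ofReal_natCast, ← ofReal_div_of_pos hn₁,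
      ← ofReal_mul (by positivity)]
  · rw [hunion, ← Nat.mul_factorial_pred hn₀]
    congr 1
    push_cast
    field_simp
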